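/- Let n ≥ 3 be odd and let R = Z₂[a,b]/(a^{n+1}, b²) be graded with deg a = deg b = m for some m ≥ 1. Then R has exactly two degree-preserving Z₂-algebra automorphisms: the identity, and the automorphism determined by a ↦ a + b, b ↦ b. (The elements a and a+b both have nilpotency index n+1 while b has nilpotency index 2, so a graded automorphism either fixes a and b or swaps a with a+b while fixing b.) -/

import Mathlib

open MvPolynomial

/-- The ring `Z₂[a,b]/(a^{n+1}, b²)`. -/
noncomputable abbrev PSRing (n : ℕ) : Type :=
  MvPolynomial (Fin 2) (ZMod 2) ⧸
    (Ideal.span {(X 0 : MvPolynomial (Fin 2) (ZMod 2)) ^ (n + 1), (X 1) ^ 2})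

/-- The class `a` in `Z₂[a,b]/(a^{n+1}, b²)`. -/
noncomputable def aCl (n : ℕ) : PSRing n := Ideal.Quotient.mk _ (X 0)

/-- The class `b` in `Z₂[a,b]/(a^{n+1}, b²)`. -/
noncomputable def bCl (n : ℕ) : PSRing n := Ideal.Quotient.mk _ (X 1)

/-- The degree-`k` piece of `Z₂[a,b]/(a^{n+1}, b²)` for the grading with
`deg a = deg b = m`: the `ℤ₂`-span of the monomials `aⁱbʲ` with `m(i+j) = k`. -/
noncomputable def psPiece (n m k : ℕ) : Set (PSRing n) :=
  ↑(Submodule.span (ZMod 2)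
    {r : PSRing n | ∃ i j : ℕ, m * (i + j) = k ∧ r = aCl n ^ i * bCl n ^ j})

/-- A degree-preserving (`ℤ₂`-algebra) automorphism of `Z₂[a,b]/(a^{n+1}, b²)` for the
grading with `deg a = deg b = m`. -/
def IsGradedAut (n m : ℕ) (φ : PSRing n ≃+* PSRing n) : Prop :=
  ∀ k : ℕ, φ '' psPiece n m k = psPiece n m k

/-!
Since `2 = 0` and `b² = 0`, we have `(a + b)² = a²`, so for odd `n` also
`(a + b)^(n+1) = (a²)^((n+1)/2) = 0`; hence `a ↦ a + b, b ↦ b` defines an endomorphism,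
which is an involution and preserves the grading because it maps the generators into degree `m`.
Conversely, a graded automorphism permutes the degree-`m` piece `{0, a, b, a + b}` and preserves
which elements square to zero: it must fix `b`, the only nonzero element there with `b² = 0`, and
send `a` to one of `a`, `a + b`, the elements with nonzero square. That `b ≠ 0` and `a² ≠ 0` is
seen by mapping to the dual numbers `Z₂[ε]` and to `Z₂[X]/(X^(n+1))`.
-/

theorem Submodule.mem_span_pair_zmod_two {M : Type*} [AddCommGroup M] [Module (ZMod 2) M]
    {u v x : M} :
    x ∈ Submodule.span (ZMod 2) {u, v} ↔ x = 0 ∨ x = u ∨ x = v ∨ x = u + v := by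
  rw [Submodule.mem_span_pair]
  constructor
  · have hZ2 : ∀ c : ZMod 2, c = 0 ∨ c = 1 := by decide
    rintro ⟨c, d, rfl⟩
    rcases hZ2 c with rfl | rfl <;> rcases hZ2 d with rfl | rfl <;> simp
  · rintro (rfl | rfl | rfl | rfl)
    exacts [⟨0, 0, by simp⟩, ⟨1, 0, by simp⟩, ⟨0, 1, by simp⟩, ⟨1, 1, by simp⟩]

namespace PSRing

variable {n : ℕ}

theorem aCl_pow_succ : aCl n ^ (n + 1) = 0 := by
  rw [aCl, ← map_pow, Ideal.Quotient.eq_zero_iff_mem]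
  exact Ideal.subset_span (by simp)

theorem bCl_sq : bCl n ^ 2 = 0 := by
  rw [bCl, ← map_pow, Ideal.Quotient.eq_zero_iff_mem]
  exact Ideal.subset_span (by simp)

theorem two_eq_zero : (2 : PSRing n) = 0 := by
  have h : (2 : ZMod 2) = 0 := rfl
  rw [← map_ofNat (algebraMap (ZMod 2) (PSRing n)) 2, h, map_zero]

theorem aCl_add_bCl_sq : (aCl n + bCl n) ^ 2 = aCl n ^ 2 := by
  rw [add_sq, bCl_sq, two_eq_zero]
  ring

theorem aCl_add_bCl_pow_succ (hn : Odd n) : (aCl n + bCl n) ^ (n + 1) = 0 := by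
  obtain ⟨k, hk⟩ := hn
  have hk' : n + 1 = 2 * (k + 1) := by omega
  calc (aCl n + bCl n) ^ (n + 1) = ((aCl n + bCl n) ^ 2) ^ (k + 1) := by rw [← pow_mul, ← hk']
    _ = (aCl n ^ 2) ^ (k + 1) := by rw [aCl_add_bCl_sq]
    _ = 0 := by rw [← pow_mul, ← hk', aCl_pow_succ]

section UniversalProperty

variable {S : Type*} [CommRing S] [Algebra (ZMod 2) S]

noncomputable def lift (x y : S) (hx : x ^ (n + 1) = 0) (hy : y ^ 2 = 0) : PSRing n →+* S :=
  Ideal.Quotient.lift _ (aeval ![x, y]).toRingHom fun p hp => by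
    refine (Ideal.span_le (I := RingHom.ker (aeval ![x, y]).toRingHom)).2 ?_ hp
    simp [Set.insert_subset_iff, hx, hy]

@[simp]
theorem lift_aCl (x y : S) (hx : x ^ (n + 1) = 0) (hy : y ^ 2 = 0) :
    lift x y hx hy (aCl n) = x := by
  simp [lift, aCl]

@[simp]
theorem lift_bCl (x y : S) (hx : x ^ (n + 1) = 0) (hy : y ^ 2 = 0) :
    lift x y hx hy (bCl n) = y := by
  simp [lift, bCl]

end UniversalProperty

theorem ringHom_ext {S : Type*} [Semiring S] {f g : PSRing n →+* S}
    (ha : f (aCl n) = g (aCl n)) (hb : f (bCl n) = g (bCl n)) : f = g := by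
  refine Ideal.Quotient.ringHom_ext (MvPolynomial.ringHom_ext' (RingHom.ext_zmod _ _) ?_)
  intro i
  fin_cases i
  exacts [ha, hb]

theorem ringEquiv_ext {φ χ : PSRing n ≃+* PSRing n}
    (ha : φ (aCl n) = χ (aCl n)) (hb : φ (bCl n) = χ (bCl n)) : φ = χ :=
  RingEquiv.toRingHom_injective (ringHom_ext ha hb)

open DualNumber in
theorem bCl_ne_zero : bCl n ≠ 0 := by
  intro h
  have h' := congrArg (lift (0 : (ZMod 2)[ε]) ε (zero_pow n.succ_ne_zero) eps_pow_two) h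
  simpa using congrArg TrivSqZeroExt.snd h'

theorem aCl_pow_ne_zero {k : ℕ} (hk : k ≤ n) : aCl n ^ k ≠ 0 := by
  let J := Ideal.span {(Polynomial.X : Polynomial (ZMod 2)) ^ (n + 1)}
  have hX : Ideal.Quotient.mk J Polynomial.X ^ (n + 1) = 0 := by
    rw [← map_pow, Ideal.Quotient.eq_zero_iff_mem]
    exact Ideal.subset_span rfl
  intro h
  have h' := congrArg (lift _ 0 hX (zero_pow two_ne_zero)) h
  rw [map_pow, lift_aCl, ← map_pow, map_zero, Ideal.Quotient.eq_zero_iff_mem,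
    Ideal.mem_span_singleton, pow_dvd_pow_iff Polynomial.X_ne_zero Polynomial.not_isUnit_X] at h'
  omega

noncomputable def shearHom (hn : Odd n) : PSRing n →+* PSRing n :=
  lift (aCl n + bCl n) (bCl n) (aCl_add_bCl_pow_succ hn) bCl_sq

theorem shearHom_comp_self (hn : Odd n) : (shearHom hn).comp (shearHom hn) = RingHom.id _ := by
  refine ringHom_ext ?_ ?_
  · have hbb : bCl n + bCl n = 0 := by rw [← two_mul, two_eq_zero, zero_mul]
    simp [shearHom, add_assoc, hbb]
  · simp [shearHom]

noncomputable def shear (hn : Odd n) : PSRing n ≃+* PSRing n :=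
  RingEquiv.ofRingHom (shearHom hn) (shearHom hn) (shearHom_comp_self hn) (shearHom_comp_self hn)

@[simp]
theorem shear_aCl (hn : Odd n) : shear hn (aCl n) = aCl n + bCl n :=
  lift_aCl _ _ (aCl_add_bCl_pow_succ hn) bCl_sq

@[simp]
theorem shear_bCl (hn : Odd n) : shear hn (bCl n) = bCl n :=
  lift_bCl _ _ (aCl_add_bCl_pow_succ hn) bCl_sq

theorem shear_ne_refl (hn : Odd n) : shear hn ≠ RingEquiv.refl _ := fun h =>
  bCl_ne_zero (n := n) (by simpa using congrArg (· (aCl n)) h)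

section Grading

variable {m k l : ℕ} {x y : PSRing n}

theorem mul_mem_psPiece (hx : x ∈ psPiece n m k) (hy : y ∈ psPiece n m l) :
    x * y ∈ psPiece n m (k + l) := by
  have hxy := Submodule.mul_mem_mul hx hy
  rw [Submodule.span_mul_span] at hxy
  refine Submodule.span_mono ?_ hxy
  rintro _ ⟨_, ⟨i, j, rfl, rfl⟩, _, ⟨i', j', rfl, rfl⟩, rfl⟩
  exact ⟨i + i', j + j', by ring, by ring⟩

theorem pow_mem_psPiece (hx : x ∈ psPiece n m k) (i : ℕ) : x ^ i ∈ psPiece n m (k * i) := by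
  induction i with
  | zero => exact Submodule.subset_span ⟨0, 0, by simp, by simp⟩
  | succ i ih => rw [pow_succ, Nat.mul_succ]; exact mul_mem_psPiece ih hx

theorem aCl_mem_psPiece : aCl n ∈ psPiece n m m :=
  Submodule.subset_span ⟨1, 0, by simp, by simp⟩

theorem bCl_mem_psPiece : bCl n ∈ psPiece n m m :=
  Submodule.subset_span ⟨0, 1, by simp, by simp⟩

theorem image_psPiece_subset {f : PSRing n →+* PSRing n} (ha : f (aCl n) ∈ psPiece n m m)
    (hb : f (bCl n) ∈ psPiece n m m) (k : ℕ) : f '' psPiece n m k ⊆ psPiece n m k := by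
  let g := f.toAddMonoidHom.toZModLinearMap 2
  change g '' psPiece n m k ⊆ psPiece n m k
  rw [psPiece, ← Submodule.map_coe, Submodule.map_span, SetLike.coe_subset_coe, Submodule.span_le]
  rintro _ ⟨_, ⟨i, j, rfl, rfl⟩, rfl⟩
  change f (aCl n ^ i * bCl n ^ j) ∈ psPiece n m (m * (i + j))
  rw [map_mul, map_pow, map_pow, mul_add]
  exact mul_mem_psPiece (pow_mem_psPiece ha i) (pow_mem_psPiece hb j)

theorem isGradedAut_of_mem_psPiece {φ : PSRing n ≃+* PSRing n}
    (ha : φ (aCl n) ∈ psPiece n m m) (hb : φ (bCl n) ∈ psPiece n m m)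
    (ha' : φ.symm (aCl n) ∈ psPiece n m m) (hb' : φ.symm (bCl n) ∈ psPiece n m m) :
    IsGradedAut n m φ := fun k => by
  refine (image_psPiece_subset (f := φ.toRingHom) ha hb k).antisymm fun x hx => ?_
  exact ⟨φ.symm x, image_psPiece_subset (f := φ.symm.toRingHom) ha' hb' k ⟨x, hx, rfl⟩,
    by simp⟩

theorem isGradedAut_shear (hn : Odd n) : IsGradedAut n m (shear hn) := by
  have ha : shear hn (aCl n) ∈ psPiece n m m := by
    rw [shear_aCl]; exact Submodule.add_mem _ aCl_mem_psPiece bCl_mem_psPiece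
  have hb : shear hn (bCl n) ∈ psPiece n m m := by rw [shear_bCl]; exact bCl_mem_psPiece
  exact isGradedAut_of_mem_psPiece ha hb ha hb

end Grading

section Classification

variable {m : ℕ} {x : PSRing n}

theorem mem_psPiece_self_iff (hm : 0 < m) :
    x ∈ psPiece n m m ↔ x = 0 ∨ x = aCl n ∨ x = bCl n ∨ x = aCl n + bCl n := by
  have hgen : {r : PSRing n | ∃ i j : ℕ, m * (i + j) = m ∧ r = aCl n ^ i * bCl n ^ j}
      = {aCl n, bCl n} := by
    ext r
    simp only [mul_eq_left₀ hm.ne', Nat.add_eq_one_iff, Set.mem_ofPred_eq, Set.mem_insert_iff,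
      Set.mem_singleton_iff]
    constructor
    · rintro ⟨i, j, ⟨rfl, rfl⟩ | ⟨rfl, rfl⟩, rfl⟩ <;> simp
    · rintro (rfl | rfl)
      exacts [⟨1, 0, by simp⟩, ⟨0, 1, by simp⟩]
  rw [psPiece, hgen, SetLike.mem_coe, Submodule.mem_span_pair_zmod_two]

theorem eq_bCl_of_mem_psPiece_self (hn : 2 ≤ n) (hm : 0 < m) (hx : x ∈ psPiece n m m)
    (hsq : x ^ 2 = 0) (h0 : x ≠ 0) : x = bCl n := by
  rcases (mem_psPiece_self_iff hm).1 hx with rfl | rfl | rfl | rfl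
  · exact absurd rfl h0
  · exact absurd hsq (aCl_pow_ne_zero hn)
  · rfl
  · exact absurd (aCl_add_bCl_sq ▸ hsq) (aCl_pow_ne_zero hn)

theorem eq_aCl_or_eq_aCl_add_bCl_of_mem_psPiece_self (hm : 0 < m) (hx : x ∈ psPiece n m m)
    (hsq : x ^ 2 ≠ 0) : x = aCl n ∨ x = aCl n + bCl n := by
  rcases (mem_psPiece_self_iff hm).1 hx with rfl | rfl | rfl | rfl
  · simp at hsq
  · exact .inl rfl
  · exact absurd bCl_sq hsq
  · exact .inr rfl

end Classification

end PSRing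

namespace IsGradedAut

open PSRing

variable {n m : ℕ} {φ : PSRing n ≃+* PSRing n} {x : PSRing n}

theorem map_mem_psPiece_self (hφ : IsGradedAut n m φ) (hx : x ∈ psPiece n m m) :
    φ x ∈ psPiece n m m :=
  hφ m ▸ Set.mem_image_of_mem φ hx

theorem map_bCl (hφ : IsGradedAut n m φ) (hn : 2 ≤ n) (hm : 0 < m) : φ (bCl n) = bCl n :=
  eq_bCl_of_mem_psPiece_self hn hm (hφ.map_mem_psPiece_self bCl_mem_psPiece)
    (by rw [← map_pow, bCl_sq, map_zero]) ((map_ne_zero_iff φ φ.injective).2 bCl_ne_zero)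

theorem map_aCl (hφ : IsGradedAut n m φ) (hn : 2 ≤ n) (hm : 0 < m) :
    φ (aCl n) = aCl n ∨ φ (aCl n) = aCl n + bCl n :=
  eq_aCl_or_eq_aCl_add_bCl_of_mem_psPiece_self hm (hφ.map_mem_psPiece_self aCl_mem_psPiece)
    (by rw [← map_pow]; exact (map_ne_zero_iff φ φ.injective).2 (aCl_pow_ne_zero hn))

end IsGradedAut

/-- Let `n ≥ 3` be odd and grade `R = Z₂[a,b]/(a^{n+1}, b²)` by
`deg a = deg b = m` (`m ≥ 1`).  Then `R` has exactly two degree-preserving `ℤ₂`-algebra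
automorphisms: the identity, and the automorphism determined by `a ↦ a + b`,
`b ↦ b`. -/
theorem gradedAut_classification_of_odd (n m : ℕ) (hn : 3 ≤ n) (hno : Odd n)
    (hm : 1 ≤ m) :
    ∃ ψ : PSRing n ≃+* PSRing n,
      IsGradedAut n m ψ ∧
      ψ (aCl n) = aCl n + bCl n ∧
      ψ (bCl n) = bCl n ∧
      ψ ≠ RingEquiv.refl (PSRing n) ∧
      ∀ φ : PSRing n ≃+* PSRing n, IsGradedAut n m φ →
        φ = RingEquiv.refl (PSRing n) ∨ φ = ψ := by
  open PSRing in
  refine ⟨shear hno, isGradedAut_shear hno, shear_aCl hno, shear_bCl hno, shear_ne_refl hno,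
    fun φ hφ => ?_⟩
  have hb := hφ.map_bCl (by omega) hm
  rcases hφ.map_aCl (by omega) hm with ha | ha
  · exact .inl (PSRing.ringEquiv_ext ha hb)
  · exact .inr (PSRing.ringEquiv_ext (ha.trans (PSRing.shear_aCl hno).symm)
      (hb.trans (PSRing.shear_bCl hno).symm))
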